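/- arXiv:2206.08340 — 2 statements merged into one kernel-verified Lean document; each statement's English description precedes it below -/
import Mathlib

section
/- Let n ≥ 1 and 0 ≤ α < n. Let b : ℝⁿ → ℝ and f : ℝⁿ → ℝ be locally integrable. Then for every x ∈ ℝⁿ such that M_α f(x) < ∞ and M_{α,b} f(x) < ∞, one has | b(x) M_α f(x) − M_α(b f)(x) | ≤ M_{α,b} f(x) + 2 b⁻(x) M_α f(x). -/
open MeasureTheory Metric Set
open scoped ENNReal NNReal

/-- The fractional maximal function `M_α f` on `ℝⁿ`:
`M_α f (x) = sup_{B ∋ x} |B|^{α/n - 1} ∫_B |f|`. -/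
noncomputable def fracMax (n : ℕ) (α : ℝ) (f : EuclideanSpace ℝ (Fin n) → ℝ)
    (x : EuclideanSpace ℝ (Fin n)) : ℝ≥0∞ :=
  ⨆ (c : EuclideanSpace ℝ (Fin n)) (r : ℝ) (_ : 0 < r) (_ : x ∈ ball c r),
    volume (ball c r) ^ (α / n - 1) * ∫⁻ y in ball c r, (‖f y‖₊ : ℝ≥0∞)

/-- The fractional maximal commutator `M_{α,b} f`:
`M_{α,b} f (x) = sup_{B ∋ x} |B|^{α/n - 1} ∫_B |b(x) - b(y)| |f(y)| dy`. -/
noncomputable def fracMaxComm (n : ℕ) (α : ℝ) (b f : EuclideanSpace ℝ (Fin n) → ℝ)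
    (x : EuclideanSpace ℝ (Fin n)) : ℝ≥0∞ :=
  ⨆ (c : EuclideanSpace ℝ (Fin n)) (r : ℝ) (_ : 0 < r) (_ : x ∈ ball c r),
    volume (ball c r) ^ (α / n - 1) *
      ∫⁻ y in ball c r, (‖b x - b y‖₊ : ℝ≥0∞) * (‖f y‖₊ : ℝ≥0∞)

/-- The local fractional maximal function `M_{α,B₀} f`, supremum over balls `B` with
`x ∈ B ⊆ B₀`. For `α = 0` this is the local Hardy–Littlewood maximal function `M_{B₀}`. -/
noncomputable def fracMaxLocal (n : ℕ) (α : ℝ) (B₀ : Set (EuclideanSpace ℝ (Fin n)))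
    (f : EuclideanSpace ℝ (Fin n) → ℝ) (x : EuclideanSpace ℝ (Fin n)) : ℝ≥0∞ :=
  ⨆ (c : EuclideanSpace ℝ (Fin n)) (r : ℝ) (_ : 0 < r) (_ : x ∈ ball c r)
    (_ : ball c r ⊆ B₀),
    volume (ball c r) ^ (α / n - 1) * ∫⁻ y in ball c r, (‖f y‖₊ : ℝ≥0∞)

/-- The average `b_B = |B|⁻¹ ∫_B b` of `b` over the ball `B = ball c r`. -/
noncomputable def ballAvg (n : ℕ) (b : EuclideanSpace ℝ (Fin n) → ℝ)
    (c : EuclideanSpace ℝ (Fin n)) (r : ℝ) : ℝ :=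
  (volume (ball c r)).toReal⁻¹ * ∫ y in ball c r, b y

/-!
On a single ball `B ∋ x`, the triangle inequality `| |b(x)| - |b(y)| | ≤ |b(x) - b(y)|`, integrated
against `|f|`, gives `| |b(x)| ∫_B |f| - ∫_B |b f| | ≤ ∫_B |b(x) - b(y)| |f(y)| dy`; taking suprema
over balls yields `| |b(x)| M_α f(x) - M_α(b f)(x) | ≤ M_{α,b} f(x)`. Since `b = |b| - 2 b⁻`,
replacing `|b(x)|` by `b(x)` costs at most `2 b⁻(x) M_α f(x)`.
-/

section TriangleIntegral

variable {𝕜 : Type*} [NormedRing 𝕜] [NormMulClass 𝕜]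

theorem enorm_mul_le_enorm_mul_add_enorm_sub_mul (a c d : 𝕜) :
    ‖c * d‖ₑ ≤ ‖a‖ₑ * ‖d‖ₑ + ‖a - c‖ₑ * ‖d‖ₑ := by
  rw [enorm_mul, ← add_mul]
  gcongr
  simpa [add_comm] using enorm_sub_le (a := a) (b := a - c)

theorem enorm_mul_enorm_le_enorm_mul_add_enorm_sub_mul (a c d : 𝕜) :
    ‖a‖ₑ * ‖d‖ₑ ≤ ‖c * d‖ₑ + ‖a - c‖ₑ * ‖d‖ₑ := by
  rw [enorm_mul, ← add_mul]
  gcongr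
  simpa [add_comm] using enorm_sub_le (a := a - c) (b := -c)

variable {X : Type*} [MeasurableSpace X] {μ : Measure X} {b f : X → 𝕜}

theorem lintegral_enorm_mul_le (hf : AEStronglyMeasurable f μ) (a : 𝕜) :
    ∫⁻ y, ‖b y * f y‖ₑ ∂μ ≤ ‖a‖ₑ * ∫⁻ y, ‖f y‖ₑ ∂μ + ∫⁻ y, ‖a - b y‖ₑ * ‖f y‖ₑ ∂μ :=
  calc ∫⁻ y, ‖b y * f y‖ₑ ∂μ ≤ ∫⁻ y, ‖a‖ₑ * ‖f y‖ₑ + ‖a - b y‖ₑ * ‖f y‖ₑ ∂μ :=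
        lintegral_mono fun y => enorm_mul_le_enorm_mul_add_enorm_sub_mul a (b y) (f y)
    _ = ‖a‖ₑ * ∫⁻ y, ‖f y‖ₑ ∂μ + ∫⁻ y, ‖a - b y‖ₑ * ‖f y‖ₑ ∂μ := by
        rw [lintegral_add_left' (hf.enorm.const_mul _), lintegral_const_mul' _ _ enorm_ne_top]

theorem enorm_mul_lintegral_enorm_le (hb : AEStronglyMeasurable b μ)
    (hf : AEStronglyMeasurable f μ) (a : 𝕜) :
    ‖a‖ₑ * ∫⁻ y, ‖f y‖ₑ ∂μ ≤ ∫⁻ y, ‖b y * f y‖ₑ ∂μ + ∫⁻ y, ‖a - b y‖ₑ * ‖f y‖ₑ ∂μ :=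
  calc ‖a‖ₑ * ∫⁻ y, ‖f y‖ₑ ∂μ = ∫⁻ y, ‖a‖ₑ * ‖f y‖ₑ ∂μ :=
        (lintegral_const_mul' _ _ enorm_ne_top).symm
    _ ≤ ∫⁻ y, ‖b y * f y‖ₑ + ‖a - b y‖ₑ * ‖f y‖ₑ ∂μ :=
        lintegral_mono fun y => enorm_mul_enorm_le_enorm_mul_add_enorm_sub_mul a (b y) (f y)
    _ = ∫⁻ y, ‖b y * f y‖ₑ ∂μ + ∫⁻ y, ‖a - b y‖ₑ * ‖f y‖ₑ ∂μ :=
        lintegral_add_left' (hb.mul hf).enorm _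

end TriangleIntegral

section FractionalMaximal

variable {n : ℕ} {α : ℝ} {b f : EuclideanSpace ℝ (Fin n) → ℝ} {x c : EuclideanSpace ℝ (Fin n)}
  {r : ℝ}

theorem le_fracMax (hr : 0 < r) (hx : x ∈ ball c r) :
    volume (ball c r) ^ (α / n - 1) * ∫⁻ y in ball c r, ‖f y‖ₑ ≤ fracMax n α f x :=
  le_iSup_of_le c <| le_iSup_of_le r <| le_iSup_of_le hr <| le_iSup_of_le hx le_rfl

theorem le_fracMaxComm (hr : 0 < r) (hx : x ∈ ball c r) :
    volume (ball c r) ^ (α / n - 1) * ∫⁻ y in ball c r, ‖b x - b y‖ₑ * ‖f y‖ₑ ≤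
      fracMaxComm n α b f x :=
  le_iSup_of_le c <| le_iSup_of_le r <| le_iSup_of_le hr <| le_iSup_of_le hx le_rfl

theorem fracMax_mul_le (hf : AEStronglyMeasurable f volume) :
    fracMax n α (fun y => b y * f y) x ≤ ‖b x‖ₑ * fracMax n α f x + fracMaxComm n α b f x := by
  refine iSup₂_le fun c r => iSup₂_le fun hr hx => ?_
  calc volume (ball c r) ^ (α / n - 1) * ∫⁻ y in ball c r, ‖b y * f y‖ₑ
      ≤ volume (ball c r) ^ (α / n - 1) * (‖b x‖ₑ * (∫⁻ y in ball c r, ‖f y‖ₑ) +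
          ∫⁻ y in ball c r, ‖b x - b y‖ₑ * ‖f y‖ₑ) := by
        gcongr
        exact lintegral_enorm_mul_le hf.restrict (b x)
    _ = ‖b x‖ₑ * (volume (ball c r) ^ (α / n - 1) * (∫⁻ y in ball c r, ‖f y‖ₑ)) +
          volume (ball c r) ^ (α / n - 1) * ∫⁻ y in ball c r, ‖b x - b y‖ₑ * ‖f y‖ₑ := by
        rw [mul_add, mul_left_comm]
    _ ≤ ‖b x‖ₑ * fracMax n α f x + fracMaxComm n α b f x := by
        gcongr
        exacts [le_fracMax hr hx, le_fracMaxComm hr hx]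

theorem enorm_mul_fracMax_le (hb : AEStronglyMeasurable b volume)
    (hf : AEStronglyMeasurable f volume) :
    ‖b x‖ₑ * fracMax n α f x ≤ fracMax n α (fun y => b y * f y) x + fracMaxComm n α b f x := by
  simp only [fracMax, ENNReal.mul_iSup]
  refine iSup₂_le fun c r => iSup₂_le fun hr hx => ?_
  calc ‖b x‖ₑ * (volume (ball c r) ^ (α / n - 1) * ∫⁻ y in ball c r, ‖f y‖ₑ)
      ≤ volume (ball c r) ^ (α / n - 1) * ((∫⁻ y in ball c r, ‖b y * f y‖ₑ) +
          ∫⁻ y in ball c r, ‖b x - b y‖ₑ * ‖f y‖ₑ) := by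
        rw [mul_left_comm]
        gcongr
        exact enorm_mul_lintegral_enorm_le hb.restrict hf.restrict (b x)
    _ = volume (ball c r) ^ (α / n - 1) * (∫⁻ y in ball c r, ‖b y * f y‖ₑ) +
          volume (ball c r) ^ (α / n - 1) * ∫⁻ y in ball c r, ‖b x - b y‖ₑ * ‖f y‖ₑ :=
        mul_add _ _ _
    _ ≤ fracMax n α (fun y => b y * f y) x + fracMaxComm n α b f x := by
        gcongr
        exacts [le_fracMax hr hx, le_fracMaxComm hr hx]

end FractionalMaximal

theorem ENNReal.toReal_le_toReal_add_of_le {a b c : ℝ≥0∞} (h : a ≤ b + c) (hb : b ≠ ⊤)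
    (hc : c ≠ ⊤) : a.toReal ≤ b.toReal + c.toReal :=
  (ENNReal.toReal_mono (ENNReal.add_ne_top.2 ⟨hb, hc⟩) h).trans ENNReal.toReal_add_le

theorem abs_mul_sub_le_add_two_mul_negPart {β M N C : ℝ} (hM : 0 ≤ M)
    (hN : N ≤ |β| * M + C) (hβ : |β| * M ≤ N + C) :
    |β * M - N| ≤ C + 2 * max (-β) 0 * M := by
  rcases le_total 0 β with hβ0 | hβ0
  · rw [abs_of_nonneg hβ0] at hN hβ
    rw [max_eq_right (by linarith), abs_le]
    constructor <;> nlinarith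
  · rw [abs_of_nonpos hβ0] at hN hβ
    rw [max_eq_left (by linarith), abs_le]
    constructor <;> nlinarith

theorem stmt8_general (n : ℕ) (α : ℝ)
    (b : EuclideanSpace ℝ (Fin n) → ℝ) (hb : LocallyIntegrable b volume)
    (f : EuclideanSpace ℝ (Fin n) → ℝ) (hf : LocallyIntegrable f volume)
    (x : EuclideanSpace ℝ (Fin n))
    (h1 : fracMax n α f x ≠ ⊤) (h2 : fracMaxComm n α b f x ≠ ⊤) :
    |b x * (fracMax n α f x).toReal - (fracMax n α (fun y => b y * f y) x).toReal| ≤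
      (fracMaxComm n α b f x).toReal +
        2 * max (-(b x)) 0 * (fracMax n α f x).toReal := by
  have hmul : ‖b x‖ₑ * fracMax n α f x ≠ ⊤ := ENNReal.mul_ne_top enorm_ne_top h1
  have hA := fracMax_mul_le (b := b) (x := x) (α := α) hf.aestronglyMeasurable
  have hB := enorm_mul_fracMax_le (x := x) (α := α) hb.aestronglyMeasurable
    hf.aestronglyMeasurable
  have hfin : fracMax n α (fun y => b y * f y) x ≠ ⊤ :=
    ne_top_of_le_ne_top (ENNReal.add_ne_top.2 ⟨hmul, h2⟩) hA
  have hnorm : (‖b x‖ₑ * fracMax n α f x).toReal = |b x| * (fracMax n α f x).toReal := by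
    rw [ENNReal.toReal_mul, toReal_enorm, Real.norm_eq_abs]
  refine abs_mul_sub_le_add_two_mul_negPart ENNReal.toReal_nonneg ?_ ?_ <;> rw [← hnorm]
  · exact ENNReal.toReal_le_toReal_add_of_le hA hmul h2
  · exact ENNReal.toReal_le_toReal_add_of_le hB hfin h2

/-- pointwise estimate
`|[b, M_α] f (x)| ≤ M_{α,b} f (x) + 2 b⁻(x) M_α f (x)` for arbitrary `b`. -/
theorem stmt8 (n : ℕ) (hn : 1 ≤ n) (α : ℝ) (hα0 : 0 ≤ α) (hαn : α < n)
    (b : EuclideanSpace ℝ (Fin n) → ℝ) (hb : LocallyIntegrable b volume)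
    (f : EuclideanSpace ℝ (Fin n) → ℝ) (hf : LocallyIntegrable f volume)
    (x : EuclideanSpace ℝ (Fin n))
    (h1 : fracMax n α f x ≠ ⊤) (h2 : fracMaxComm n α b f x ≠ ⊤) :
    |b x * (fracMax n α f x).toReal - (fracMax n α (fun y => b y * f y) x).toReal| ≤
      (fracMaxComm n α b f x).toReal +
        2 * max (-(b x)) 0 * (fracMax n α f x).toReal :=
  stmt8_general n α b hb f hf x h1 h2
end

section
/- Let n ≥ 1, 0 < β < 1 and s ∈ [1, ∞). If b : ℝⁿ → ℝ satisfies b(x) ≥ 0 for all x and |b(x) − b(y)| ≤ C |x − y|^β for all x, y ∈ ℝⁿ, then there is a constant K (depending only on n, β, s, C) such that for every ball B ⊂ ℝⁿ, (|B|⁻¹ ∫_B | b(x) − M_B b(x) |^s dx)^{1/s} ≤ K |B|^{β/n}. -/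
open MeasureTheory Metric Set
open scoped ENNReal NNReal

/-! On a ball `B` of radius `r`, a nonnegative `β`-Hölder function `b` oscillates by at most
`D = C (2r)^β`. Every average of `b` over a ball `x ∈ B' ⊆ B` is therefore at most `b x + D`,
while the average over `B` itself is at least `b x - D`; hence `|b - M_B b| ≤ D` on `B`, so its
`L^s` average over `B` is at most `D`, and `D` is a constant multiple of `|B|^{β/n}`. -/

section Averages

variable {α : Type*} [MeasurableSpace α] {μ : Measure α} {s : Set α}

theorem setLAverage_le_of_forall_le (hs : MeasurableSet s) {f : α → ℝ≥0∞} {a : ℝ≥0∞}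
    (h : ∀ x ∈ s, f x ≤ a) : ⨍⁻ x in s, f x ∂μ ≤ a :=
  (laverage_le_essSup f).trans (essSup_le_of_ae_le a (ae_restrict_of_forall_mem hs h))

theorem le_setLAverage_of_forall_le (hs : MeasurableSet s) (hs0 : μ s ≠ 0) (hsT : μ s ≠ ∞)
    {f : α → ℝ≥0∞} {a : ℝ≥0∞} (h : ∀ x ∈ s, a ≤ f x) : a ≤ ⨍⁻ x in s, f x ∂μ :=
  (setLAverage_const hs0 hsT a).symm.le.trans (laverage_mono_ae (ae_restrict_of_forall_mem hs h))

theorem rpow_inv_mul_setIntegral_rpow_abs_le (hs : MeasurableSet s) (hs0 : μ s ≠ 0)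
    (hsT : μ s ≠ ∞) {g : α → ℝ} {p D : ℝ} (hp : 0 < p) (h : ∀ x ∈ s, |g x| ≤ D) :
    ((μ s).toReal⁻¹ * ∫ x in s, |g x| ^ p ∂μ) ^ (1 / p) ≤ D := by
  obtain ⟨x₀, hx₀⟩ := nonempty_of_measure_ne_zero hs0
  have hD : 0 ≤ D := (abs_nonneg _).trans (h x₀ hx₀)
  have hm : 0 < (μ s).toReal := ENNReal.toReal_pos hs0 hsT
  have hint : ∫ x in s, |g x| ^ p ∂μ ≤ D ^ p * (μ s).toReal := by
    refine (Real.le_norm_self _).trans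
      (norm_setIntegral_le_of_norm_le_const hsT.lt_top fun x hx => ?_)
    rw [Real.norm_eq_abs, abs_of_nonneg (by positivity)]
    exact Real.rpow_le_rpow (abs_nonneg _) (h x hx) hp.le
  have hnonneg : 0 ≤ ∫ x in s, |g x| ^ p ∂μ :=
    setIntegral_nonneg hs fun x _ => by positivity
  calc ((μ s).toReal⁻¹ * ∫ x in s, |g x| ^ p ∂μ) ^ (1 / p)
      ≤ (D ^ p) ^ (1 / p) := by
        gcongr
        rwa [inv_mul_le_iff₀ hm, mul_comm]
    _ = D := by rw [← Real.rpow_mul hD, mul_one_div_cancel hp.ne', Real.rpow_one]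

end Averages

section Holder

variable {E : Type*} [NormedAddCommGroup E] {b : E → ℝ} {C β : ℝ}

theorem nonneg_of_forall_abs_sub_le_mul_rpow [Nontrivial E]
    (hb : ∀ x y, |b x - b y| ≤ C * ‖x - y‖ ^ β) : 0 ≤ C := by
  obtain ⟨v, hv⟩ := exists_ne (0 : E)
  have h := (abs_nonneg _).trans (hb v 0)
  rw [sub_zero] at h
  exact nonneg_of_mul_nonneg_left h (Real.rpow_pos_of_pos (norm_pos_iff.2 hv) β)

theorem abs_sub_le_of_mem_ball (hC : 0 ≤ C) (hβ : 0 ≤ β)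
    (hb : ∀ x y, |b x - b y| ≤ C * ‖x - y‖ ^ β) {c x y : E} {r : ℝ}
    (hx : x ∈ ball c r) (hy : y ∈ ball c r) : |b x - b y| ≤ C * (2 * r) ^ β := by
  refine (hb x y).trans ?_
  have : ‖x - y‖ ≤ 2 * r := by
    rw [← dist_eq_norm]
    linarith [dist_triangle_right x y c, mem_ball.1 hx, mem_ball.1 hy]
  gcongr

end Holder

theorem toReal_addHaar_ball_rpow {E : Type*} [NormedAddCommGroup E] [NormedSpace ℝ E]
    [MeasurableSpace E] [BorelSpace E] [FiniteDimensional ℝ E] (μ : Measure E)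
    [μ.IsAddHaarMeasure] (x : E) {r : ℝ} (hr : 0 < r) (hE : Module.finrank ℝ E ≠ 0) (β : ℝ) :
    (μ (ball x r)).toReal ^ (β / Module.finrank ℝ E) =
      r ^ β * (μ (ball 0 1)).toReal ^ (β / Module.finrank ℝ E) := by
  rw [Measure.addHaar_ball_of_pos μ x hr, ENNReal.toReal_mul,
    ENNReal.toReal_ofReal (by positivity), Real.mul_rpow (by positivity) ENNReal.toReal_nonneg,
    ← Real.rpow_natCast, ← Real.rpow_mul hr.le, mul_div_cancel₀ _ (by exact_mod_cast hE)]

section LocalMaximal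

variable {n : ℕ} {f : EuclideanSpace ℝ (Fin n) → ℝ} {x c : EuclideanSpace ℝ (Fin n)} {r : ℝ}

theorem rpow_zero_div_sub_one_mul_lintegral {α : Type*} [MeasurableSpace α] (μ : Measure α)
    (s : Set α) (g : α → ℝ≥0∞) :
    μ s ^ ((0 : ℝ) / n - 1) * ∫⁻ y in s, g y ∂μ = ⨍⁻ y in s, g y ∂μ := by
  rw [zero_div, zero_sub, ENNReal.rpow_neg_one, setLAverage_eq, div_eq_mul_inv, mul_comm]

theorem fracMaxLocal_zero_le_of_forall_le {B₀ : Set (EuclideanSpace ℝ (Fin n))} {a : ℝ≥0∞}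
    (h : ∀ y ∈ B₀, ‖f y‖ₑ ≤ a) : fracMaxLocal n 0 B₀ f x ≤ a := by
  refine iSup_le fun c => iSup_le fun r => iSup_le fun _ => iSup_le fun _ =>
    iSup_le fun hsub => ?_
  rw [rpow_zero_div_sub_one_mul_lintegral]
  exact setLAverage_le_of_forall_le measurableSet_ball fun y hy => h y (hsub hy)

theorem setLAverage_le_fracMaxLocal_zero (hx : x ∈ ball c r) :
    ⨍⁻ y in ball c r, ‖f y‖ₑ ∂volume ≤ fracMaxLocal n 0 (ball c r) f x := by
  rw [← rpow_zero_div_sub_one_mul_lintegral (n := n)]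
  exact le_iSup₂_of_le c r <| le_iSup₂_of_le (pos_of_mem_ball hx) hx <|
    le_iSup_of_le subset_rfl le_rfl

theorem abs_sub_toReal_fracMaxLocal_zero_le {D : ℝ} (hf : ∀ y ∈ ball c r, 0 ≤ f y)
    (hosc : ∀ x ∈ ball c r, ∀ y ∈ ball c r, |f x - f y| ≤ D) (hx : x ∈ ball c r) :
    |f x - (fracMaxLocal n 0 (ball c r) f x).toReal| ≤ D := by
  have hr := pos_of_mem_ball hx
  have hupper : fracMaxLocal n 0 (ball c r) f x ≤ ENNReal.ofReal (f x + D) :=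
    fracMaxLocal_zero_le_of_forall_le fun y hy => by
      rw [Real.enorm_eq_ofReal (hf y hy)]
      exact ENNReal.ofReal_le_ofReal (by linarith [(abs_sub_le_iff.1 (hosc x hx y hy)).2])
  have hlower : ENNReal.ofReal (f x - D) ≤ fracMaxLocal n 0 (ball c r) f x := by
    refine (le_setLAverage_of_forall_le measurableSet_ball (measure_ball_pos volume c hr).ne'
      measure_ball_lt_top.ne fun y hy => ?_).trans (setLAverage_le_fracMaxLocal_zero hx)
    rw [Real.enorm_eq_ofReal_abs]
    exact ENNReal.ofReal_le_ofReal
      (by linarith [(abs_sub_le_iff.1 (hosc x hx y hy)).1, le_abs_self (f y)])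
  have hD : 0 ≤ D := (abs_nonneg _).trans (hosc x hx x hx)
  have h₁ := ENNReal.toReal_le_of_le_ofReal (by linarith [hf x hx]) hupper
  have h₂ := (ENNReal.ofReal_le_iff_le_toReal (ne_top_of_le_ne_top ENNReal.ofReal_ne_top hupper)).1
    hlower
  exact abs_sub_le_iff.2 ⟨by linarith, by linarith⟩

end LocalMaximal

theorem stmt14_general (n : ℕ) (hn : 1 ≤ n) (β : ℝ) (hβ0 : 0 < β)
    (s : ℝ) (hs : 1 ≤ s)
    (b : EuclideanSpace ℝ (Fin n) → ℝ) (hbpos : ∀ x, 0 ≤ b x) (C : ℝ)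
    (hb : ∀ x y, |b x - b y| ≤ C * ‖x - y‖ ^ β) :
    ∃ K : ℝ, ∀ (c : EuclideanSpace ℝ (Fin n)) (r : ℝ), 0 < r →
      ((volume (ball c r)).toReal⁻¹ *
          ∫ x in ball c r,
            |b x - (fracMaxLocal n 0 (ball c r) b x).toReal| ^ s) ^ (1 / s) ≤
        K * (volume (ball c r)).toReal ^ (β / n) := by
  have hdim : Module.finrank ℝ (EuclideanSpace ℝ (Fin n)) ≠ 0 := by
    rw [finrank_euclideanSpace_fin]; omega
  have : Nontrivial (EuclideanSpace ℝ (Fin n)) :=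
    Module.nontrivial_of_finrank_pos (Nat.pos_of_ne_zero hdim)
  have hC := nonneg_of_forall_abs_sub_le_mul_rpow hb
  set V := (volume (ball (0 : EuclideanSpace ℝ (Fin n)) 1)).toReal with hVdef
  have hV : 0 < V := ENNReal.toReal_pos (measure_ball_pos volume 0 one_pos).ne'
    measure_ball_lt_top.ne
  refine ⟨C * 2 ^ β * V ^ (-(β / n)), fun c r hr => ?_⟩
  have hvol := toReal_addHaar_ball_rpow volume c hr hdim β
  rw [finrank_euclideanSpace_fin, ← hVdef] at hvol
  calc _ ≤ C * (2 * r) ^ β :=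
        rpow_inv_mul_setIntegral_rpow_abs_le measurableSet_ball
          (measure_ball_pos volume c hr).ne' measure_ball_lt_top.ne (by linarith)
          fun x hx => abs_sub_toReal_fracMaxLocal_zero_le (fun y _ => hbpos y)
            (fun x hx y hy => abs_sub_le_of_mem_ball hC hβ0.le hb hx hy) hx
    _ = _ := by
      rw [hvol, Real.mul_rpow zero_le_two hr.le, Real.rpow_neg hV.le]
      field_simp

/-- if `b ≥ 0` and `b ∈ Λ̇_β` with constant `C`, then for every ball `B`,
`(|B|⁻¹ ∫_B |b(x) - M_B b(x)|^s dx)^{1/s} ≤ K |B|^{β/n}` with `K = K(n, β, s, C)`. -/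
theorem stmt14 (n : ℕ) (hn : 1 ≤ n) (β : ℝ) (hβ0 : 0 < β) (hβ1 : β < 1)
    (s : ℝ) (hs : 1 ≤ s)
    (b : EuclideanSpace ℝ (Fin n) → ℝ) (hbpos : ∀ x, 0 ≤ b x) (C : ℝ)
    (hb : ∀ x y, |b x - b y| ≤ C * ‖x - y‖ ^ β) :
    ∃ K : ℝ, ∀ (c : EuclideanSpace ℝ (Fin n)) (r : ℝ), 0 < r →
      ((volume (ball c r)).toReal⁻¹ *
          ∫ x in ball c r,
            |b x - (fracMaxLocal n 0 (ball c r) b x).toReal| ^ s) ^ (1 / s) ≤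
        K * (volume (ball c r)).toReal ^ (β / n) :=
  stmt14_general n hn β hβ0 s hs b hbpos C hb
end
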